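/- For a sequent Γ▷Δ, let At(Γ▷Δ) denote the set of all atomic sequents derivable from {Γ▷Δ} using only the elimination rules. Then Γ▷Δ is derivable from At(Γ▷Δ) using only the introduction rules, where for the constants the introduction rules are taken to be the axiom schemas Γ▷Δ,⊤ and ⊥,Γ▷Δ together with the rules ⟨from Γ▷Δ infer ⊤,Γ▷Δ⟩ and ⟨from Γ▷Δ infer Γ▷Δ,⊥⟩. -/
import Mathlib


/-- Propositional formulas: atoms, conjunction, disjunction, De Morgan negation, ⊤, ⊥. -/
inductive Fm : Type where
  | atom : ℕ → Fm
  | conj : Fm → Fm → Fm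
  | disj : Fm → Fm → Fm
  | neg  : Fm → Fm
  | top  : Fm
  | bot  : Fm
deriving DecidableEq

/-- A sequent is a pair of finite multisets of formulas. -/
abbrev Sqnt : Type := Multiset Fm × Multiset Fm

/-- A formula is an atom. -/
def isAtom (φ : Fm) : Prop := ∃ i, φ = Fm.atom i

/-- A sequent is atomic if every formula in it is an atom. -/
def AtomicSeq (s : Sqnt) : Prop := (∀ φ ∈ s.1, isAtom φ) ∧ (∀ φ ∈ s.2, isAtom φ)

/-- Derivability from a set of sequents using only the elimination rules. -/
inductive ElimD (S : Set Sqnt) : Sqnt → Prop where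
  | prem {s} : s ∈ S → ElimD S s
  | andRE1 {φ ψ Γ Δ} : ElimD S (Γ, Fm.conj φ ψ ::ₘ Δ) → ElimD S (Γ, φ ::ₘ Δ)
  | andRE2 {φ ψ Γ Δ} : ElimD S (Γ, Fm.conj φ ψ ::ₘ Δ) → ElimD S (Γ, ψ ::ₘ Δ)
  | andLE {φ ψ Γ Δ} : ElimD S (Fm.conj φ ψ ::ₘ Γ, Δ) → ElimD S (φ ::ₘ ψ ::ₘ Γ, Δ)
  | orLE1 {φ ψ Γ Δ} : ElimD S (Fm.disj φ ψ ::ₘ Γ, Δ) → ElimD S (φ ::ₘ Γ, Δ)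
  | orLE2 {φ ψ Γ Δ} : ElimD S (Fm.disj φ ψ ::ₘ Γ, Δ) → ElimD S (ψ ::ₘ Γ, Δ)
  | orRE {φ ψ Γ Δ} : ElimD S (Γ, Fm.disj φ ψ ::ₘ Δ) → ElimD S (Γ, φ ::ₘ ψ ::ₘ Δ)
  | negRE {φ Γ Δ} : ElimD S (Γ, Fm.neg φ ::ₘ Δ) → ElimD S (φ ::ₘ Γ, Δ)
  | negLE {φ Γ Δ} : ElimD S (Fm.neg φ ::ₘ Γ, Δ) → ElimD S (Γ, φ ::ₘ Δ)
  | topLE {Γ Δ} : ElimD S (Fm.top ::ₘ Γ, Δ) → ElimD S (Γ, Δ)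
  | botRE {Γ Δ} : ElimD S (Γ, Fm.bot ::ₘ Δ) → ElimD S (Γ, Δ)

/-- At(Γ▷Δ): the set of all atomic sequents derivable from {Γ▷Δ} using only the
elimination rules. -/
def AtSet (s : Sqnt) : Set Sqnt := {t | AtomicSeq t ∧ ElimD ({s} : Set Sqnt) t}

/-- Derivability from a set of sequents using only the introduction rules, where for the
constants the introduction rules are the axiom schemas Γ▷Δ,⊤ and ⊥,Γ▷Δ together with the
rules inferring ⊤,Γ▷Δ and Γ▷Δ,⊥ from Γ▷Δ. -/
inductive IntroD (S : Set Sqnt) : Sqnt → Prop where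
  | prem {s} : s ∈ S → IntroD S s
  | andR {φ ψ Γ Δ} : IntroD S (Γ, φ ::ₘ Δ) → IntroD S (Γ, ψ ::ₘ Δ) →
      IntroD S (Γ, Fm.conj φ ψ ::ₘ Δ)
  | andL {φ ψ Γ Δ} : IntroD S (φ ::ₘ ψ ::ₘ Γ, Δ) → IntroD S (Fm.conj φ ψ ::ₘ Γ, Δ)
  | orL {φ ψ Γ Δ} : IntroD S (φ ::ₘ Γ, Δ) → IntroD S (ψ ::ₘ Γ, Δ) →
      IntroD S (Fm.disj φ ψ ::ₘ Γ, Δ)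
  | orR {φ ψ Γ Δ} : IntroD S (Γ, φ ::ₘ ψ ::ₘ Δ) → IntroD S (Γ, Fm.disj φ ψ ::ₘ Δ)
  | negR {φ Γ Δ} : IntroD S (φ ::ₘ Γ, Δ) → IntroD S (Γ, Fm.neg φ ::ₘ Δ)
  | negL {φ Γ Δ} : IntroD S (Γ, φ ::ₘ Δ) → IntroD S (Fm.neg φ ::ₘ Γ, Δ)
  | topRax (Γ Δ : Multiset Fm) : IntroD S (Γ, Fm.top ::ₘ Δ)
  | botLax (Γ Δ : Multiset Fm) : IntroD S (Fm.bot ::ₘ Γ, Δ)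
  | topL {Γ Δ} : IntroD S (Γ, Δ) → IntroD S (Fm.top ::ₘ Γ, Δ)
  | botR {Γ Δ} : IntroD S (Γ, Δ) → IntroD S (Γ, Fm.bot ::ₘ Δ)

private def fsz : Fm → ℕ
  | .atom _ => 1
  | .conj a b => fsz a + fsz b + 1
  | .disj a b => fsz a + fsz b + 1
  | .neg a => fsz a + 1
  | .top => 1
  | .bot => 1

private def msz (Γ : Multiset Fm) : ℕ := (Γ.map fsz).sum

private lemma msz_cons (φ : Fm) (Γ : Multiset Fm) : msz (φ ::ₘ Γ) = fsz φ + msz Γ := by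
  simp [msz]

private lemma elimTrans {s t u : Sqnt} (h : ElimD {s} t) (h2 : ElimD ({t} : Set Sqnt) u) :
    ElimD ({s} : Set Sqnt) u := by
  induction h2 with
  | prem hm => exact hm ▸ h
  | andRE1 _ ih => exact ElimD.andRE1 ih
  | andRE2 _ ih => exact ElimD.andRE2 ih
  | andLE _ ih => exact ElimD.andLE ih
  | orLE1 _ ih => exact ElimD.orLE1 ih
  | orLE2 _ ih => exact ElimD.orLE2 ih
  | orRE _ ih => exact ElimD.orRE ih
  | negRE _ ih => exact ElimD.negRE ih
  | negLE _ ih => exact ElimD.negLE ih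
  | topLE _ ih => exact ElimD.topLE ih
  | botRE _ ih => exact ElimD.botRE ih

private lemma atSubset {s t : Sqnt} (h : ElimD ({s} : Set Sqnt) t) : AtSet t ⊆ AtSet s :=
  fun _ hu => ⟨hu.1, elimTrans h hu.2⟩

private lemma introMono {S T : Set Sqnt} (h : S ⊆ T) {s : Sqnt} (hd : IntroD S s) :
    IntroD T s := by
  induction hd with
  | prem hm => exact IntroD.prem (h hm)
  | andR _ _ ih1 ih2 => exact IntroD.andR ih1 ih2
  | andL _ ih => exact IntroD.andL ih
  | orL _ _ ih1 ih2 => exact IntroD.orL ih1 ih2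
  | orR _ ih => exact IntroD.orR ih
  | negR _ ih => exact IntroD.negR ih
  | negL _ ih => exact IntroD.negL ih
  | topRax Γ Δ => exact IntroD.topRax Γ Δ
  | botLax Γ Δ => exact IntroD.botLax Γ Δ
  | topL _ ih => exact IntroD.topL ih
  | botR _ ih => exact IntroD.botR ih

private lemma step {s t : Sqnt} (h : ElimD ({s} : Set Sqnt) t) (hd : IntroD (AtSet t) t) :
    IntroD (AtSet s) t := introMono (atSubset h) hd

/-- Every sequent Γ▷Δ is derivable from At(Γ▷Δ) using only the introduction rules. -/
theorem stmt12 (Γ Δ : Multiset Fm) : IntroD (AtSet (Γ, Δ)) (Γ, Δ) := by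
  have key : ∀ n Γ Δ, msz Γ + msz Δ ≤ n → IntroD (AtSet (Γ, Δ)) (Γ, Δ) := by
    intro n
    induction n using Nat.strong_induction_on with
    | _ n ih =>
    intro Γ Δ hle
    by_cases hA : AtomicSeq (Γ, Δ)
    · exact IntroD.prem ⟨hA, ElimD.prem rfl⟩
    · rw [AtomicSeq, not_and_or] at hA
      rcases hA with hA | hA
      · push_neg at hA
        obtain ⟨φ, hmem, hna⟩ := hA
        obtain ⟨Γ', rfl⟩ : ∃ Γ', Γ = φ ::ₘ Γ' := ⟨Γ.erase φ, (Multiset.cons_erase hmem).symm⟩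
        rw [msz_cons] at hle
        cases φ with
        | atom i => exact absurd ⟨i, rfl⟩ hna
        | conj a b =>
          refine IntroD.andL (step (ElimD.andLE (ElimD.prem rfl)) (ih _ ?_ _ _ le_rfl))
          simp only [fsz, msz_cons] at hle ⊢; omega
        | disj a b =>
          refine IntroD.orL
            (step (ElimD.orLE1 (ElimD.prem rfl)) (ih _ ?_ _ _ le_rfl))
            (step (ElimD.orLE2 (ElimD.prem rfl)) (ih _ ?_ _ _ le_rfl)) <;>
          · simp only [fsz, msz_cons] at hle ⊢; omega
        | neg a =>
          refine IntroD.negL (step (ElimD.negLE (ElimD.prem rfl)) (ih _ ?_ _ _ le_rfl))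
          simp only [fsz, msz_cons] at hle ⊢; omega
        | top =>
          refine IntroD.topL (step (ElimD.topLE (ElimD.prem rfl)) (ih _ ?_ _ _ le_rfl))
          simp only [fsz] at hle; omega
        | bot => exact IntroD.botLax Γ' Δ
      · push_neg at hA
        obtain ⟨φ, hmem, hna⟩ := hA
        obtain ⟨Δ', rfl⟩ : ∃ Δ', Δ = φ ::ₘ Δ' := ⟨Δ.erase φ, (Multiset.cons_erase hmem).symm⟩
        rw [msz_cons] at hle
        cases φ with
        | atom i => exact absurd ⟨i, rfl⟩ hna
        | conj a b =>
          refine IntroD.andR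
            (step (ElimD.andRE1 (ElimD.prem rfl)) (ih _ ?_ _ _ le_rfl))
            (step (ElimD.andRE2 (ElimD.prem rfl)) (ih _ ?_ _ _ le_rfl)) <;>
          · simp only [fsz, msz_cons] at hle ⊢; omega
        | disj a b =>
          refine IntroD.orR (step (ElimD.orRE (ElimD.prem rfl)) (ih _ ?_ _ _ le_rfl))
          simp only [fsz, msz_cons] at hle ⊢; omega
        | neg a =>
          refine IntroD.negR (step (ElimD.negRE (ElimD.prem rfl)) (ih _ ?_ _ _ le_rfl))
          simp only [fsz, msz_cons] at hle ⊢; omega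
        | top => exact IntroD.topRax Γ Δ'
        | bot =>
          refine IntroD.botR (step (ElimD.botRE (ElimD.prem rfl)) (ih _ ?_ _ _ le_rfl))
          simp only [fsz] at hle; omega
  exact key _ Γ Δ le_rfl
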